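/- arXiv:math/0311520 — 4 statements merged into one kernel-verified Lean document; each statement's English description precedes it below -/
import Mathlib

section
/- Let k be a commutative ring, G a finite group whose order is invertible in k, and R a k-algebra. If E is a left module over the group algebra R[G] which is injective as a left R-module (via restriction of scalars), then E is injective as a left R[G]-module. -/
/-!
Given an `R[G]`-linear injection `i : X → Y` and an `R[G]`-linear map `f : X → E`, injectivity
of `E` over `R` extends `f` along `i` to a merely `R`-linear map `g : Y → E`. The sum of its
conjugates `∑ₛ s⁻¹ • g (s • ·)` is `R[G]`-linear and extends `|G| • f`; since `|G|` acts invertibly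
on `E`, dividing by it gives an `R[G]`-linear extension of `f`.
-/

theorem bijective_nsmul_of_isUnit_natCast {S V : Type*} [Semiring S] [AddCommMonoid V]
    [Module S V] {n : ℕ} (hn : IsUnit (n : S)) : Function.Bijective (fun v : V => n • v) := by
  simpa only [Nat.cast_smul_eq_nsmul] using hn.smul_bijective (β := V)

noncomputable section

namespace MonoidAlgebra

section Monoid

variable {R G : Type*} [Semiring R] [Monoid G]

theorem smul_eq_single_one_mul (r : R) (x : R[G]) : r • x = single 1 r * x := by
  rw [← smul_one_mul, one_def, smul_single', mul_one]

theorem isScalarTower_compHom_singleOneRingHom (M : Type*) [AddCommMonoid M] [Module R[G] M] :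
    letI : Module R M := Module.compHom M (singleOneRingHom (R := R) (M := G))
    IsScalarTower R R[G] M :=
  letI : Module R M := Module.compHom M (singleOneRingHom (R := R) (M := G))
  ⟨fun r x m => by
    change (r • x) • m = (single (1 : G) r : R[G]) • x • m
    rw [smul_eq_single_one_mul, mul_smul]⟩

variable {M N : Type*}
  [AddCommMonoid M] [Module R M] [Module R[G] M] [IsScalarTower R R[G] M]
  [AddCommMonoid N] [Module R N] [Module R[G] N] [IsScalarTower R R[G] N]

theorem single_smul_eq_smul_single_one_smul (g : G) (r : R) (m : M) :
    single g r • m = r • single g (1 : R) • m := by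
  rw [← smul_assoc, smul_single', mul_one]

theorem single_one_smul_smul_comm (g : G) (r : R) (m : M) :
    single g (1 : R) • r • m = r • single g (1 : R) • m := by
  rw [← single_smul_eq_smul_single_one_smul, ← smul_one_smul R[G] r m, smul_smul,
    one_def, smul_single', mul_one, single_mul_single, mul_one, one_mul]

variable (R M) in
def groupSMulLinearMap (g : G) : M →ₗ[R] M where
  toFun m := single g (1 : R) • m
  map_add' := smul_add _
  map_smul' r m := single_one_smul_smul_comm g r m

@[simp]
theorem groupSMulLinearMap_apply (g : G) (m : M) :
    groupSMulLinearMap R M g m = single g (1 : R) • m :=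
  rfl

def equivariantOfLinearOfSingleOneComm (f : M →ₗ[R] N)
    (hf : ∀ (g : G) (m : M), f (single g (1 : R) • m) = single g (1 : R) • f m) :
    M →ₗ[R[G]] N where
  toFun := f
  map_add' := f.map_add
  map_smul' c m := by
    change f (c • m) = c • f m
    induction c using MonoidAlgebra.induction with
    | zero => simp only [zero_smul, map_zero]
    | single_add g r c _ _ ih =>
      rw [add_smul, add_smul, map_add, ih, single_smul_eq_smul_single_one_smul, map_smul, hf,
        ← single_smul_eq_smul_single_one_smul]

end Monoid

section Group

variable {R G : Type*} [Semiring R] [Group G] [Fintype G] {M N P : Type*}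
  [AddCommMonoid M] [Module R M] [Module R[G] M] [IsScalarTower R R[G] M]
  [AddCommMonoid N] [Module R N] [Module R[G] N] [IsScalarTower R R[G] N]
  [AddCommMonoid P] [Module R P] [Module R[G] P] [IsScalarTower R R[G] P]

variable (G) in
def sumOfConjugates (f : M →ₗ[R] N) : M →ₗ[R[G]] N :=
  equivariantOfLinearOfSingleOneComm
    (∑ s : G, groupSMulLinearMap R N s⁻¹ ∘ₗ f ∘ₗ groupSMulLinearMap R M s) fun g m => by
      simp only [LinearMap.sum_apply, LinearMap.comp_apply, groupSMulLinearMap_apply,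
        Finset.smul_sum]
      refine Fintype.sum_bijective (· * g) (Group.mulRight_bijective g) _ _ fun s ↦ ?_
      simp only [smul_smul, single_mul_single, mul_inv_rev, mul_inv_cancel_left, one_mul]

theorem sumOfConjugates_apply (f : M →ₗ[R] N) (m : M) :
    sumOfConjugates G f m = ∑ s : G, single s⁻¹ (1 : R) • f (single s (1 : R) • m) := by
  simp [sumOfConjugates, equivariantOfLinearOfSingleOneComm]

theorem sumOfConjugates_comp_restrictScalars (f : N →ₗ[R] P) (i : M →ₗ[R[G]] N) :
    sumOfConjugates G (f ∘ₗ i.restrictScalars R) = sumOfConjugates G f ∘ₗ i := by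
  ext m
  simp [sumOfConjugates_apply]

theorem sumOfConjugates_restrictScalars (f : M →ₗ[R[G]] N) :
    sumOfConjugates G (f.restrictScalars R) = Fintype.card G • f := by
  ext m
  simp [sumOfConjugates_apply, smul_smul, ← one_def]

end Group

theorem injective_of_injective_restrictScalars {R G M : Type*} [Ring R] [Group G] [Fintype G]
    [AddCommGroup M] [Module R M] [Module R[G] M] [IsScalarTower R R[G] M]
    (hG : IsUnit (Fintype.card G : R)) [Module.Injective R M] : Module.Injective R[G] M := by
  constructor
  intro X Y _ _ _ _ i hi f
  let : Module R X := Module.compHom X (singleOneRingHom (R := R) (M := G))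
  let : Module R Y := Module.compHom Y (singleOneRingHom (R := R) (M := G))
  have := isScalarTower_compHom_singleOneRingHom (R := R) (G := G) X
  have := isScalarTower_compHom_singleOneRingHom (R := R) (G := G) Y
  obtain ⟨g, hg⟩ := Module.Injective.out (i.restrictScalars R) hi (f.restrictScalars R)
  have hgi : g ∘ₗ i.restrictScalars R = f.restrictScalars R := LinearMap.ext hg
  let e := LinearEquiv.ofBijective (Fintype.card G • LinearMap.id : M →ₗ[R[G]] M)
    (bijective_nsmul_of_isUnit_natCast hG)
  refine ⟨e.symm.toLinearMap ∘ₗ sumOfConjugates G g, fun x => e.injective ?_⟩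
  calc e (e.symm (sumOfConjugates G g (i x)))
      = sumOfConjugates G (g ∘ₗ i.restrictScalars R) x := by
        rw [e.apply_symm_apply, sumOfConjugates_comp_restrictScalars]; rfl
    _ = sumOfConjugates G (f.restrictScalars R) x := by rw [hgi]
    _ = e (f x) := by rw [sumOfConjugates_restrictScalars]; rfl

end MonoidAlgebra

end

theorem injective_monoidAlgebra_of_injective_restrictScalars
    {k : Type*} [CommRing k] (G : Type*) [Group G] [Fintype G]
    (hG : IsUnit (Fintype.card G : k))
    (R : Type*) [Ring R] [Algebra k R]
    (E : Type*) [AddCommGroup E] [Module (MonoidAlgebra R G) E]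
    (hE : letI : Module R E :=
            Module.compHom E (MonoidAlgebra.singleOneRingHom (R := R) (M := G));
          Module.Injective R E) :
    Module.Injective (MonoidAlgebra R G) E := by
  let : Module R E := Module.compHom E (MonoidAlgebra.singleOneRingHom (R := R) (M := G))
  have := MonoidAlgebra.isScalarTower_compHom_singleOneRingHom (R := R) (G := G) E
  have hGR : IsUnit (Fintype.card G : R) := by simpa using hG.map (algebraMap k R)
  exact MonoidAlgebra.injective_of_injective_restrictScalars hGR
end

section
/- Let k be a commutative ring, G a finite group whose order is invertible in k, and R a k-algebra. If F is a left module over the group algebra R[G] which is flat as a left R-module (via restriction of scalars), then F is flat as a left R[G]-module. -/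
/-!
Since Mathlib's tensor products and flatness are only developed over commutative
rings, we first construct, for a (possibly noncommutative) ring `R`, the tensor
product `N ⊗[R] M` of a right `R`-module `N` and a left `R`-module `M` as the
quotient of `N ⊗[ℤ] M` by the bilinearity relations `(x·r) ⊗ m = x ⊗ (r·m)`, and we
say that a left `R`-module `M` is *flat* if tensoring with `M` preserves injectivity
of maps of right `R`-modules.
-/

universe u v

open TensorProduct MulOpposite

noncomputable def tensorRel (R : Type u) [Ring R] (N : Type v) [AddCommGroup N] [Module Rᵐᵒᵖ N]
    (M : Type v) [AddCommGroup M] [Module R M] : AddSubgroup (N ⊗[ℤ] M) :=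
  AddSubgroup.closure
    {z | ∃ (x : N) (r : R) (m : M), z = (op r • x) ⊗ₜ[ℤ] m - x ⊗ₜ[ℤ] (r • m)}

def RTensor (R : Type u) [Ring R] (N : Type v) [AddCommGroup N] [Module Rᵐᵒᵖ N]
    (M : Type v) [AddCommGroup M] [Module R M] : Type v :=
  (N ⊗[ℤ] M) ⧸ tensorRel R N M

noncomputable instance {R : Type u} [Ring R] {N : Type v} [AddCommGroup N] [Module Rᵐᵒᵖ N]
    {M : Type v} [AddCommGroup M] [Module R M] : AddCommGroup (RTensor R N M) :=
  QuotientAddGroup.Quotient.addCommGroup _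

noncomputable def RTensor.map {R : Type u} [Ring R] {N N' : Type v}
    [AddCommGroup N] [Module Rᵐᵒᵖ N] [AddCommGroup N'] [Module Rᵐᵒᵖ N']
    (M : Type v) [AddCommGroup M] [Module R M] (f : N →ₗ[Rᵐᵒᵖ] N') :
    RTensor R N M →+ RTensor R N' M :=
  QuotientAddGroup.map _ _
    (TensorProduct.map f.toAddMonoidHom.toIntLinearMap (LinearMap.id : M →ₗ[ℤ] M)).toAddMonoidHom
    (by
      unfold tensorRel
      rw [AddSubgroup.closure_le]
      rintro z ⟨x, r, m, rfl⟩
      refine AddSubgroup.mem_comap.2 ?_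
      refine AddSubgroup.subset_closure ?_
      refine ⟨f x, r, m, ?_⟩
      simp [map_smul])

def IsFlatModule (R : Type u) [Ring R] (M : Type u) [AddCommGroup M] [Module R M] : Prop :=
  ∀ (N N' : Type u) (_ : AddCommGroup N) (_ : AddCommGroup N')
    (_ : Module Rᵐᵒᵖ N) (_ : Module Rᵐᵒᵖ N') (f : N →ₗ[Rᵐᵒᵖ] N'),
    Function.Injective f → Function.Injective (RTensor.map M f)

/-!
Let `c ∈ R` be central with `|G| • c = 1` (the image of `|G|⁻¹ ∈ k`). For every right
`R[G]`-module `N`, the averaging map `x ⊗ m ↦ ∑ g, x g ⊗ c g⁻¹ m` from `N ⊗[R[G]] F` to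
`N ⊗[R] F` is well defined, natural in `N`, and a section of the canonical surjection
`N ⊗[R] F → N ⊗[R[G]] F`. Hence `N ⊗[R[G]] F` is a natural retract of `N ⊗[R] F`, and
injectivity of `N ⊗[R] F → N' ⊗[R] F` forces injectivity of `N ⊗[R[G]] F → N' ⊗[R[G]] F`.
-/

open MonoidAlgebra

namespace RTensor

section Basic

variable {R : Type u} [Ring R] {N N' M : Type v} [AddCommGroup N] [Module Rᵐᵒᵖ N]
  [AddCommGroup N'] [Module Rᵐᵒᵖ N'] [AddCommGroup M] [Module R M]

variable (R N M) in
noncomputable def mk : N ⊗[ℤ] M →+ RTensor R N M :=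
  QuotientAddGroup.mk' (tensorRel R N M)

theorem mk_smul_tmul (x : N) (r : R) (m : M) :
    mk R N M ((op r • x) ⊗ₜ m) = mk R N M (x ⊗ₜ (r • m)) :=
  QuotientAddGroup.eq_iff_sub_mem.2 (AddSubgroup.subset_closure ⟨x, r, m, rfl⟩)

theorem map_mk (f : N →ₗ[Rᵐᵒᵖ] N') (x : N) (m : M) :
    map M f (mk R N M (x ⊗ₜ m)) = mk R N' M (f x ⊗ₜ m) :=
  rfl

theorem addMonoidHom_ext {A : Type*} [AddCommGroup A] {φ ψ : RTensor R N M →+ A}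
    (h : ∀ x m, φ (mk R N M (x ⊗ₜ m)) = ψ (mk R N M (x ⊗ₜ m))) : φ = ψ :=
  QuotientAddGroup.addMonoidHom_ext _ <| AddMonoidHom.toIntLinearMap_injective <|
    TensorProduct.ext' h

noncomputable def lift {A : Type*} [AddCommGroup A] (φ : N ⊗[ℤ] M →+ A)
    (hφ : ∀ x (r : R) m, φ ((op r • x) ⊗ₜ m) = φ (x ⊗ₜ (r • m))) : RTensor R N M →+ A :=
  QuotientAddGroup.lift _ φ <| (AddSubgroup.closure_le _).2 <| by
    rintro _ ⟨x, r, m, rfl⟩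
    simp [hφ]

theorem lift_mk {A : Type*} [AddCommGroup A] (φ : N ⊗[ℤ] M →+ A)
    (hφ : ∀ x (r : R) m, φ ((op r • x) ⊗ₜ m) = φ (x ⊗ₜ (r • m))) (w : N ⊗[ℤ] M) :
    lift φ hφ (mk R N M w) = φ w :=
  rfl

noncomputable def restrict {S : Type u} [Ring S] [Module Sᵐᵒᵖ N] [Module S M] (φ : R →+* S)
    (hN : ∀ r (x : N), op r • x = op (φ r) • x) (hM : ∀ r (m : M), r • m = φ r • m) :
    RTensor R N M →+ RTensor S N M :=
  lift (mk S N M) fun x r m => by rw [hN, hM]; exact mk_smul_tmul x (φ r) m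

end Basic

section Average

variable {R G : Type u} [Ring R] [Group G] [Fintype G]
  {N N' F : Type v} [AddCommGroup N] [Module (MonoidAlgebra R G)ᵐᵒᵖ N] [Module Rᵐᵒᵖ N]
  [AddCommGroup N'] [Module (MonoidAlgebra R G)ᵐᵒᵖ N'] [Module Rᵐᵒᵖ N']
  [AddCommGroup F] [Module (MonoidAlgebra R G) F] [Module R F]

variable (G N F) in
noncomputable def averageAux (c : R) : N ⊗[ℤ] F →+ RTensor R N F :=
  ∑ g : G, (mk R N F).comp (TensorProduct.map
    (DistribSMul.toLinearMap ℤ N (op (single g (1 : R))))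
    (DistribSMul.toLinearMap ℤ F (single g⁻¹ c : MonoidAlgebra R G))).toAddMonoidHom

theorem averageAux_tmul (c : R) (x : N) (m : F) :
    averageAux G N F c (x ⊗ₜ m) =
      ∑ g : G, mk R N F ((op (single g (1 : R)) • x) ⊗ₜ (single g⁻¹ c • m)) := by
  simp [averageAux]

theorem averageAux_single_smul_tmul {c : R} (hc : ∀ r : R, r * c = c * r)
    (hN : ∀ (r : R) (x : N), op r • x = op (single (1 : G) r) • x)
    (hF : ∀ (r : R) (m : F), r • m = single (1 : G) r • m) (g : G) (r : R) (x : N) (m : F) :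
    averageAux G N F c ((op (single g r) • x) ⊗ₜ m) =
      averageAux G N F c (x ⊗ₜ (single g r • m)) := by
  rw [averageAux_tmul, averageAux_tmul]
  -- reindex by `h ↦ g * h`; moving `r` across the tensor sign needs `r * c = c * r`
  refine Fintype.sum_equiv (Equiv.mulLeft g) _ _ fun h => ?_
  have hx : op (single h (1 : R)) • op (single g r) • x =
      op r • op (single (g * h) (1 : R)) • x := by
    simp only [hN, smul_smul, ← op_mul, single_mul_single, mul_one, one_mul]
  have hm : single (g * h)⁻¹ c • single g r • m = single h⁻¹ (r * c) • m := by
    simp only [smul_smul, single_mul_single, mul_inv_rev, inv_mul_cancel_right, hc]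
  rw [hx, mk_smul_tmul, hF, smul_smul, single_mul_single, one_mul, Equiv.coe_mulLeft, hm]

theorem averageAux_smul_tmul {c : R} (hc : ∀ r : R, r * c = c * r)
    (hN : ∀ (r : R) (x : N), op r • x = op (single (1 : G) r) • x)
    (hF : ∀ (r : R) (m : F), r • m = single (1 : G) r • m)
    (x : N) (a : MonoidAlgebra R G) (m : F) :
    averageAux G N F c ((op a • x) ⊗ₜ m) = averageAux G N F c (x ⊗ₜ (a • m)) := by
  induction a using MonoidAlgebra.induction with
  | zero => simp
  | single_add g r b _ _ ih =>
    rw [op_add, add_smul, add_smul, add_tmul, tmul_add, map_add, map_add,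
      averageAux_single_smul_tmul hc hN hF, ih]

noncomputable def average {c : R} (hc : ∀ r : R, r * c = c * r)
    (hN : ∀ (r : R) (x : N), op r • x = op (single (1 : G) r) • x)
    (hF : ∀ (r : R) (m : F), r • m = single (1 : G) r • m) :
    RTensor (MonoidAlgebra R G) N F →+ RTensor R N F :=
  lift (averageAux G N F c) (averageAux_smul_tmul hc hN hF)

theorem restrict_comp_average {c : R} (hc : ∀ r : R, r * c = c * r)
    (hcard : Fintype.card G • c = 1)
    (hN : ∀ (r : R) (x : N), op r • x = op (single (1 : G) r) • x)
    (hF : ∀ (r : R) (m : F), r • m = single (1 : G) r • m) :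
    (restrict singleOneRingHom hN hF).comp (average hc hN hF) = AddMonoidHom.id _ := by
  refine addMonoidHom_ext fun x m => ?_
  have hg : ∀ g : G,
      mk (MonoidAlgebra R G) N F ((op (single g (1 : R)) • x) ⊗ₜ (single g⁻¹ c • m)) =
        mk _ N F (x ⊗ₜ (single (1 : G) c • m)) := fun g => by
    rw [mk_smul_tmul, smul_smul, single_mul_single, one_mul, mul_inv_cancel]
  simp only [AddMonoidHom.comp_apply, average, lift_mk, averageAux_tmul, map_sum, restrict]
  rw [Finset.sum_congr rfl fun g _ => hg g, Finset.sum_const, Finset.card_univ, ← map_nsmul,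
    ← tmul_smul, ← smul_assoc, smul_single, hcard, ← one_def, one_smul]
  rfl

theorem average_injective {c : R} (hc : ∀ r : R, r * c = c * r)
    (hcard : Fintype.card G • c = 1)
    (hN : ∀ (r : R) (x : N), op r • x = op (single (1 : G) r) • x)
    (hF : ∀ (r : R) (m : F), r • m = single (1 : G) r • m) :
    Function.Injective (average hc hN hF) :=
  Function.LeftInverse.injective (g := restrict singleOneRingHom hN hF)
    (DFunLike.congr_fun (restrict_comp_average hc hcard hN hF))

theorem average_comp_map {c : R} (hc : ∀ r : R, r * c = c * r)
    (hN : ∀ (r : R) (x : N), op r • x = op (single (1 : G) r) • x)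
    (hN' : ∀ (r : R) (x : N'), op r • x = op (single (1 : G) r) • x)
    (hF : ∀ (r : R) (m : F), r • m = single (1 : G) r • m)
    (f : N →ₗ[(MonoidAlgebra R G)ᵐᵒᵖ] N') (fR : N →ₗ[Rᵐᵒᵖ] N') (hf : ⇑fR = ⇑f) :
    (average hc hN' hF).comp (map F f) = (map F fR).comp (average hc hN hF) := by
  refine addMonoidHom_ext fun x m => ?_
  simp only [AddMonoidHom.comp_apply, map_mk, average, lift_mk, averageAux_tmul, map_sum, hf,
    map_smul]

end Average

end RTensor

theorem IsFlatModule.monoidAlgebra {R G : Type u} [Ring R] [Group G] [Fintype G]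
    {F : Type u} [AddCommGroup F] [Module (MonoidAlgebra R G) F] [Module R F]
    (hF : ∀ (r : R) (m : F), r • m = single (1 : G) r • m) (hflat : IsFlatModule R F)
    {c : R} (hc : ∀ r : R, r * c = c * r) (hcard : Fintype.card G • c = 1) :
    IsFlatModule (MonoidAlgebra R G) F := by
  intro N N' _ _ _ _ f hf
  let _ : Module Rᵐᵒᵖ N := Module.compHom N (singleOneRingHom (M := G)).op
  let _ : Module Rᵐᵒᵖ N' := Module.compHom N' (singleOneRingHom (M := G)).op
  have hN : ∀ (r : R) (x : N), op r • x = op (single (1 : G) r) • x := fun _ _ => rfl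
  have hN' : ∀ (r : R) (x : N'), op r • x = op (single (1 : G) r) • x := fun _ _ => rfl
  let fR : N →ₗ[Rᵐᵒᵖ] N' :=
    { f.toAddMonoidHom with map_smul' := fun r x => f.map_smul (op (single 1 r.unop)) x }
  have hcomp : Function.Injective ((RTensor.average hc hN' hF).comp (RTensor.map F f)) := by
    rw [RTensor.average_comp_map hc hN hN' hF f fR rfl]
    exact (hflat N N' _ _ _ _ fR hf).comp (RTensor.average_injective hc hcard hN hF)
  exact Function.Injective.of_comp (f := RTensor.average hc hN' hF) hcomp

theorem flat_monoidAlgebra_of_flat_restrictScalars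
    {k : Type u} [CommRing k] (G : Type u) [Group G] [Fintype G]
    (hG : IsUnit (Fintype.card G : k))
    (R : Type u) [Ring R] [Algebra k R]
    (F : Type u) [AddCommGroup F] [Module (MonoidAlgebra R G) F]
    (hF : letI : Module R F :=
            Module.compHom F (MonoidAlgebra.singleOneRingHom (R := R) (M := G));
          IsFlatModule R F) :
    IsFlatModule (MonoidAlgebra R G) F := by
  let _ : Module R F := Module.compHom F (singleOneRingHom (R := R) (M := G))
  let c : R := algebraMap k R ↑hG.unit⁻¹
  have hc : ∀ r : R, r * c = c * r := fun r => (Algebra.commutes _ r).symm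
  have hcard : Fintype.card G • c = 1 := by
    rw [← map_nsmul, nsmul_eq_mul, hG.mul_val_inv, map_one]
  exact IsFlatModule.monoidAlgebra (fun _ _ => rfl) hF hc hcard
end

section
/- Let k be a field, G a finite group whose order is not divisible by the characteristic of k, and R a k-algebra. If every finitely generated left ideal of R is projective as a left R-module (R is left semi-hereditary), then every finitely generated left ideal of the group algebra R[G] is projective as a left R[G]-module (R[G] is left semi-hereditary). -/
/-!
A finitely generated left ideal `I` of `R[G]` is finitely generated over `R` and embeds in
`R[G] ≅ R^|G|`. Over a left semi-hereditary ring every finitely generated submodule of `R^n` is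
projective: its image under the last coordinate is a finitely generated ideal, hence projective,
so it splits off, and the kernel lives in `R^(n-1)`. Thus `I` is `R`-projective, and an `R`-linear
section of a free `R[G]`-presentation of `I` becomes `R[G]`-linear after averaging over `G`
(Maschke's trick; `|G|` is invertible in `k ⊆ Z(R)`), so `I` is `R[G]`-projective.
-/

namespace Module

variable {R : Type*} [Ring R] {M P : Type*} [AddCommGroup M] [Module R M]
  [AddCommGroup P] [Module R P]

theorem nonempty_equiv_ker_prod_range (f : M →ₗ[R] P) [Projective R (LinearMap.range f)] :
    Nonempty (M ≃ₗ[R] LinearMap.ker f × LinearMap.range f) := by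
  obtain ⟨l, hl⟩ := f.rangeRestrict.exists_rightInverse_of_surjective f.range_rangeRestrict
  have hexact : Function.Exact (LinearMap.ker f).subtype f.rangeRestrict :=
    LinearMap.exact_iff.mpr (by rw [f.ker_rangeRestrict, Submodule.range_subtype])
  exact ⟨(hexact.splitSurjectiveEquiv (LinearMap.ker f).injective_subtype ⟨l, hl⟩).1⟩

theorem projective_of_injective_pi (hR : ∀ I : Ideal R, I.FG → Projective R I) (n : ℕ)
    {M : Type*} [AddCommGroup M] [Module R M] [Module.Finite R M]
    (ι : M →ₗ[R] Fin n → R) (hι : Function.Injective ι) : Projective R M := by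
  induction n generalizing M with
  | zero =>
    have : Subsingleton M := hι.subsingleton
    infer_instance
  | succ n ih =>
    let φ : M →ₗ[R] R := LinearMap.proj (Fin.last n) ∘ₗ ι
    have : Projective R (LinearMap.range φ) := hR _ (Module.Finite.iff_fg.mp inferInstance)
    obtain ⟨e⟩ := nonempty_equiv_ker_prod_range φ
    have : Module.Finite R (LinearMap.ker φ) :=
      .of_surjective (LinearMap.fst R _ _ ∘ₗ e.toLinearMap) (Prod.fst_surjective.comp e.surjective)
    have hinit : Function.Injective
        (LinearMap.funLeft R R Fin.castSucc ∘ₗ ι ∘ₗ (LinearMap.ker φ).subtype) := by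
      intro x y hxy
      refine Subtype.ext (hι (funext fun i => Fin.lastCases ?_ (fun j => congrFun hxy j) i))
      exact x.2.trans y.2.symm
    have := ih _ hinit
    exact .of_equiv e.symm

end Module

open MonoidAlgebra

namespace MonoidAlgebra

variable {R : Type*} [Ring R] {G : Type*} [Group G]
  {V W : Type*} [AddCommGroup V] [Module R V] [Module R[G] V] [IsScalarTower R R[G] V]
  [AddCommGroup W] [Module R W] [Module R[G] W] [IsScalarTower R R[G] W]

theorem smul_eq_single_one_smul (r : R) (v : V) : r • v = single (1 : G) r • v := by
  rw [← smul_one_smul R[G] r v, one_def, smul_single', mul_one]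

theorem single_smul_smul_comm (g : G) (r : R) (v : V) :
    single g (1 : R) • r • v = r • single g (1 : R) • v := by
  rw [smul_eq_single_one_smul (G := G) r, smul_eq_single_one_smul (G := G) r, smul_smul,
    smul_smul, single_mul_single, single_mul_single, one_mul, mul_one, mul_one, one_mul]

def equivariantOfLinear (f : V →ₗ[R] W)
    (h : ∀ (g : G) (v : V), f (single g (1 : R) • v) = single g (1 : R) • f v) :
    V →ₗ[R[G]] W where
  toFun := f
  map_add' := f.map_add
  map_smul' a v := by
    induction a using MonoidAlgebra.induction with
    | zero => simp
    | single_add g r a _ _ ih =>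
      have hsingle : single g r = r • single g (1 : R) := by rw [smul_single', mul_one]
      rw [RingHom.id_apply] at ih ⊢
      rw [add_smul, add_smul, f.map_add, ih, hsingle, smul_assoc, smul_assoc, f.map_smul, h]

variable [Fintype G]

-- With `c = |G|⁻¹` this is the Reynolds operator of Maschke's theorem.
variable (G) in
noncomputable def average (c : R) (hc : ∀ r : R, Commute c r) (s : V →ₗ[R] W) : V →ₗ[R] W where
  toFun v := c • ∑ g : G, single g⁻¹ (1 : R) • s (single g (1 : R) • v)
  map_add' v w := by simp only [smul_add, map_add, Finset.sum_add_distrib]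
  map_smul' r v := by
    simp only [single_smul_smul_comm, map_smul, ← Finset.smul_sum, smul_smul, RingHom.id_apply,
      (hc r).eq]

theorem average_apply (c : R) (hc : ∀ r : R, Commute c r) (s : V →ₗ[R] W) (v : V) :
    average G c hc s v = c • ∑ g : G, single g⁻¹ (1 : R) • s (single g (1 : R) • v) :=
  rfl

theorem average_single_smul (c : R) (hc : ∀ r : R, Commute c r) (s : V →ₗ[R] W) (h : G)
    (v : V) : average G c hc s (single h (1 : R) • v) = single h (1 : R) • average G c hc s v := by
  rw [average_apply, average_apply, single_smul_smul_comm, Finset.smul_sum (r := single h (1 : R))]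
  congr 1
  refine Fintype.sum_bijective (· * h) (Group.mulRight_bijective h) _ _ fun g => ?_
  simp only [smul_smul, single_mul_single, mul_inv_rev, mul_inv_cancel_left, one_mul]

theorem map_average_of_section (c : R) (hc : ∀ r : R, Commute c r)
    (hcard : c * Fintype.card G = 1) (q : W →ₗ[R[G]] V) (s : V →ₗ[R] W) (hs : ∀ v, q (s v) = v)
    (v : V) : q (average G c hc s v) = v := by
  have hterm : ∀ g : G, q (single g⁻¹ (1 : R) • s (single g (1 : R) • v)) = v := by
    intro g
    rw [q.map_smul, hs, smul_smul, single_mul_single, inv_mul_cancel, one_mul, ← one_def,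
      one_smul]
  rw [average_apply, q.map_smul_of_tower, map_sum]
  simp only [hterm, Finset.sum_const, Finset.card_univ, ← Nat.cast_smul_eq_nsmul R, smul_smul,
    hcard, one_smul]

theorem exists_section_of_isUnit_card (hG : IsUnit (Fintype.card G : R))
    (q : W →ₗ[R[G]] V) (s : V →ₗ[R] W) (hs : ∀ v, q (s v) = v) :
    ∃ σ : V →ₗ[R[G]] W, ∀ v, q (σ v) = v := by
  have hc : ∀ r : R, Commute ↑hG.unit⁻¹ r := fun r => (Nat.cast_commute _ r).units_inv_left
  exact ⟨equivariantOfLinear (average G _ hc s) (average_single_smul _ hc s),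
    map_average_of_section _ hc hG.val_inv_mul q s hs⟩

end MonoidAlgebra

theorem Module.Projective.monoidAlgebra_of_isUnit_card {R : Type*} [Ring R] {G : Type*}
    [Group G] [Fintype G] (hG : IsUnit (Fintype.card G : R)) {V : Type*} [AddCommGroup V]
    [Module R V] [Module R[G] V] [IsScalarTower R R[G] V] [Module.Projective R V] :
    Module.Projective R[G] V := by
  let q := Finsupp.linearCombination R[G] (id : V → V)
  have hq : Function.Surjective q := Finsupp.linearCombination_surjective _ Function.surjective_id
  obtain ⟨s, hs⟩ := (q.restrictScalars R).exists_rightInverse_of_surjective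
    (LinearMap.range_eq_top.mpr hq)
  obtain ⟨σ, hσ⟩ := exists_section_of_isUnit_card hG q s (LinearMap.congr_fun hs)
  exact .of_split σ q (LinearMap.ext hσ)

theorem semihereditary_monoidAlgebra
    {k : Type*} [Field k] (G : Type*) [Group G] [Fintype G]
    (hG : ¬ (ringChar k ∣ Fintype.card G))
    (R : Type*) [Ring R] [Algebra k R]
    (hR : ∀ I : Ideal R, I.FG → Module.Projective R I) :
    ∀ I : Ideal (MonoidAlgebra R G), I.FG →
      Module.Projective (MonoidAlgebra R G) I := by
  intro I hI
  have : Module.Finite R[G] I := Module.Finite.iff_fg.mpr hI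
  have : Module.Finite R I := .trans R[G] I
  let e : R[G] ≃ₗ[R] (Fin (Fintype.card G) → R) :=
    (coeffLinearEquiv R).trans <| (Finsupp.linearEquivFunOnFinite R R G).trans <|
      LinearEquiv.funCongrLeft R R (Fintype.equivFin G).symm
  have : Module.Projective R I := Module.projective_of_injective_pi hR _
    (e.toLinearMap ∘ₗ I.subtype.restrictScalars R) (e.injective.comp Subtype.val_injective)
  have hcard : IsUnit (Fintype.card G : k) :=
    isUnit_iff_ne_zero.mpr fun h => hG ((CharP.cast_eq_zero_iff k (ringChar k) _).mp h)
  exact Module.Projective.monoidAlgebra_of_isUnit_card (by simpa using hcard.map (algebraMap k R))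
end

section
/- Let k be a field, G a finite group whose order is not divisible by the characteristic of k, and R a k-algebra. If R is von Neumann regular, then the group algebra R[G] is a semiprime ring (it has no nonzero nilpotent two-sided ideals; equivalently, its nilradical-type condition I² = 0 implies I = 0 for two-sided ideals I). -/
/-!
`R[G]` is itself von Neumann regular, and in such a ring an ideal `I` with `I² = 0` vanishes,
as `a = (a x) a ∈ I²`. The left ideal `R[G] α` is a finitely generated `R`-submodule of the free
`R`-module `R[G]`, so regularity of `R` makes it the image of an `R`-linear projection `π`.
As `|G|` is invertible in `k ⊆ R`, averaging `g⁻¹ π g` over `G` gives an `R[G]`-linear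
projection `σ` onto `R[G] α`, whence `α = σ α = α σ(1)` with `σ(1) = s α`.
-/

def IsVonNeumannRegular (R : Type*) [Mul R] : Prop :=
  ∀ a : R, ∃ x : R, a * x * a = a

open Submodule in
theorem IsVonNeumannRegular.exists_mem_forall_mul_eq_self {R : Type*} [Ring R]
    (hR : IsVonNeumannRegular R) {J : Submodule R R} (hJ : J.FG) :
    ∃ e ∈ J, ∀ x ∈ J, x * e = x := by
  induction J, hJ using Submodule.fg_induction with
  | singleton a =>
    obtain ⟨x, hx⟩ := hR a
    refine ⟨x * a, smul_mem _ x (mem_span_singleton_self a), ?_⟩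
    intro y hy
    obtain ⟨r, rfl⟩ := mem_span_singleton.mp hy
    simp only [smul_eq_mul, mul_assoc, ← mul_assoc a x a, hx]
  | sup J₁ J₂ _ _ ih₁ ih₂ =>
    obtain ⟨e₁, he₁J, he₁⟩ := ih₁
    obtain ⟨e₂, he₂J, he₂⟩ := ih₂
    set f := e₂ - e₂ * e₁
    obtain ⟨y, hy⟩ := hR f
    have hfJ : y * f ∈ J₁ ⊔ J₂ :=
      smul_mem _ y (sub_mem (mem_sup_right he₂J) (mem_sup_left (smul_mem _ e₂ he₁J)))
    set e := e₁ + y * f - e₁ * (y * f)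
    have hfe₁ : f * e₁ = 0 := by simp only [f, sub_mul, mul_assoc, he₁ e₁ he₁J, sub_self]
    have h₁ : e₁ * e = e₁ := by
      simp only [e, mul_add, mul_sub, ← mul_assoc, he₁ e₁ he₁J, add_sub_cancel_right]
    have hf : f * e = f := by
      simp only [e, mul_add, mul_sub, ← mul_assoc, hfe₁, hy, zero_mul, zero_add, sub_zero]
    have h₂ : e₂ * e = e₂ := by
      calc e₂ * e = (f + e₂ * e₁) * e := by rw [sub_add_cancel]
        _ = f + e₂ * e₁ := by rw [add_mul, hf, mul_assoc, h₁]
        _ = e₂ := sub_add_cancel _ _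
    refine ⟨e, sub_mem (add_mem (mem_sup_left he₁J) hfJ) (smul_mem _ e₁ hfJ), ?_⟩
    have hfix : ∀ x e', x * e' = x → e' * e = e' → x * e = x := fun x e' hx he => by
      rw [← hx, mul_assoc, he]
    intro x hx
    obtain ⟨x₁, hx₁, x₂, hx₂, rfl⟩ := mem_sup.mp hx
    rw [add_mul, hfix x₁ e₁ (he₁ x₁ hx₁) h₁, hfix x₂ e₂ (he₂ x₂ hx₂) h₂]

open Finsupp Submodule in
theorem IsVonNeumannRegular.exists_isProj_of_le_supported {R ι : Type*} [Ring R]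
    (hR : IsVonNeumannRegular R) (s : Finset ι) {L : Submodule R (ι →₀ R)} (hL : L.FG)
    (hLs : L ≤ supported R R (s : Set ι)) :
    ∃ π : (ι →₀ R) →ₗ[R] (ι →₀ R), LinearMap.IsProj L π := by
  classical
  induction s using Finset.induction_on generalizing L with
  | empty =>
    rw [Finset.coe_empty, supported_empty, le_bot_iff] at hLs
    exact hLs ▸ ⟨0, LinearMap.IsProj.bot _ _⟩
  | @insert a s _ ih =>
    -- `u a` is a right unit for the `a`-th coordinates of `L`, so `x ↦ x - x a • u` kills those
    obtain ⟨e, ⟨u, huL, rfl⟩, hu⟩ :=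
      hR.exists_mem_forall_mul_eq_self (hL.map (lapply a))
    let σ : (ι →₀ R) →ₗ[R] (ι →₀ R) := LinearMap.toSpanSingleton R _ u ∘ₗ lapply a
    have hσL : ∀ x, σ x ∈ L := fun x => L.smul_mem _ huL
    have hL' : L.map (LinearMap.id - σ) ≤ supported R R (s : Set ι) := by
      rintro _ ⟨x, hx, rfl⟩
      rw [mem_supported']
      intro g hg
      by_cases hga : g = a
      · subst hga
        simpa [σ, sub_eq_zero] using (hu _ ⟨x, hx, rfl⟩).symm
      · have hg' : g ∉ (↑(insert a s) : Set ι) := by simp [hga, hg]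
        simp [σ, (mem_supported' R _).mp (hLs hx) g hg', (mem_supported' R _).mp (hLs huL) g hg']
    obtain ⟨π, hπ⟩ := ih (hL.map _) hL'
    refine ⟨π ∘ₗ (LinearMap.id - σ) + σ, fun x => ?_, fun x hx => ?_⟩
    · have hL'L : L.map (LinearMap.id - σ) ≤ L := by
        rintro _ ⟨y, hy, rfl⟩
        exact sub_mem hy (hσL y)
      exact add_mem (hL'L (hπ.map_mem _)) (hσL x)
    · rw [LinearMap.add_apply, LinearMap.comp_apply, hπ.map_id _ (mem_map_of_mem hx),
        LinearMap.sub_apply, LinearMap.id_apply, sub_add_cancel]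

open Submodule in
theorem IsVonNeumannRegular.exists_isProj_of_fg {R M : Type*} [Ring R] [AddCommGroup M]
    [Module R M] [Module.Free R M] (hR : IsVonNeumannRegular R) {L : Submodule R M} (hL : L.FG) :
    ∃ π : M →ₗ[R] M, LinearMap.IsProj L π := by
  classical
  let e := (Module.Free.chooseBasis R M).repr
  obtain ⟨S, hS⟩ := hL.map e.toLinearMap
  have hLs : L.map e.toLinearMap ≤ Finsupp.supported R R ↑(S.biUnion Finsupp.support) := by
    rw [← hS, span_le]
    intro x hx
    exact (Finsupp.mem_supported R x).mpr (by
      exact_mod_cast Finset.subset_biUnion_of_mem Finsupp.support hx)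
  obtain ⟨π, hπ⟩ := hR.exists_isProj_of_le_supported _ ⟨S, hS⟩ hLs
  refine ⟨e.symm ∘ₗ π ∘ₗ e, fun x => ?_, fun x hx => ?_⟩
  · exact (mem_map_equiv L).mp (hπ.map_mem (e x))
  · simp [hπ.map_id (e x) (mem_map_of_mem hx)]

section Averaging

open MonoidAlgebra

variable {R G M : Type*} [Ring R] [AddCommGroup M] [Module R M]

section Monoid

variable [Monoid G] [Module R[G] M] [IsScalarTower R R[G] M]

theorem MonoidAlgebra.single_smul_eq_smul_single_one_smul_s16 (g : G) (r : R) (m : M) :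
    single g r • m = r • single g (1 : R) • m := by
  rw [← smul_assoc, smul_single', mul_one]

theorem MonoidAlgebra.single_one_smul_smul_comm_s16 (g : G) (r : R) (m : M) :
    single g (1 : R) • r • m = r • single g (1 : R) • m := by
  calc single g (1 : R) • r • m = single g (1 : R) • single (1 : G) r • m := by
        rw [single_smul_eq_smul_single_one_smul_s16 1 r m, ← one_def, one_smul]
    _ = single g r • m := by rw [smul_smul, single_mul_single, mul_one, one_mul]
    _ = r • single g (1 : R) • m := single_smul_eq_smul_single_one_smul_s16 g r m

theorem MonoidAlgebra.map_smul_of_map_single_one_smul (f : M →ₗ[R] M)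
    (hf : ∀ (g : G) (m : M), f (single g (1 : R) • m) = single g (1 : R) • f m)
    (a : R[G]) (m : M) : f (a • m) = a • f m := by
  induction a using induction_linear with
  | zero => simp only [zero_smul, map_zero]
  | add a b ha hb => simp only [add_smul, map_add, ha, hb]
  | single g r =>
    rw [single_smul_eq_smul_single_one_smul_s16, map_smul, hf, ← single_smul_eq_smul_single_one_smul_s16]

end Monoid

variable (G) [Group G] [Fintype G] [Invertible (Fintype.card G : R)]
  [Module R[G] M] [IsScalarTower R R[G] M]

noncomputable def LinearMap.averageConjugates (π : M →ₗ[R] M) : M →ₗ[R] M where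
  toFun m := ⅟(Fintype.card G : R) •
    ∑ g : G, MonoidAlgebra.single g⁻¹ (1 : R) • π (MonoidAlgebra.single g (1 : R) • m)
  map_add' m m' := by simp only [smul_add, map_add, Finset.sum_add_distrib]
  map_smul' r m := by
    simp only [single_one_smul_smul_comm_s16, map_smul, ← Finset.smul_sum, RingHom.id_apply]
    rw [smul_smul, smul_smul, (Commute.invOf_left (Nat.cast_commute _ r)).eq]

theorem LinearMap.averageConjugates_single_one_smul (π : M →ₗ[R] M) (h : G) (m : M) :
    π.averageConjugates G (MonoidAlgebra.single h (1 : R) • m) =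
      MonoidAlgebra.single h (1 : R) • π.averageConjugates G m := by
  simp only [averageConjugates, coe_mk, AddHom.coe_mk, single_one_smul_smul_comm_s16]
  congr 1
  rw [Finset.smul_sum]
  refine Fintype.sum_bijective (· * h) (Group.mulRight_bijective h) _ _ fun g => ?_
  simp only [smul_smul, single_mul_single, mul_inv_rev, mul_inv_cancel_left, one_mul]

noncomputable def LinearMap.equivariantAverage (π : M →ₗ[R] M) : M →ₗ[R[G]] M :=
  { π.averageConjugates G with
    map_smul' := map_smul_of_map_single_one_smul _ (π.averageConjugates_single_one_smul G) }

theorem LinearMap.equivariantAverage_apply (π : M →ₗ[R] M) (m : M) :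
    π.equivariantAverage G m = ⅟(Fintype.card G : R) •
      ∑ g : G, MonoidAlgebra.single g⁻¹ (1 : R) • π (MonoidAlgebra.single g (1 : R) • m) :=
  rfl

theorem LinearMap.isProj_equivariantAverage {π : M →ₗ[R] M} {p : Submodule R[G] M}
    (hπ : LinearMap.IsProj (p.restrictScalars R) π) :
    LinearMap.IsProj p (π.equivariantAverage G) := by
  refine ⟨fun m => ?_, fun m hm => ?_⟩
  · rw [equivariantAverage_apply]
    exact (p.restrictScalars R).smul_mem _ (p.sum_mem fun g _ => p.smul_mem _ (hπ.map_mem _))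
  · have hg (g : G) :
        MonoidAlgebra.single g⁻¹ (1 : R) • π (MonoidAlgebra.single g (1 : R) • m) = m := by
      rw [hπ.map_id _ (p.smul_mem _ hm), smul_smul, single_mul_single, inv_mul_cancel, mul_one,
        ← one_def, one_smul]
    rw [equivariantAverage_apply, Finset.sum_congr rfl fun g _ => hg g, Finset.sum_const,
      Finset.card_univ, ← Nat.cast_smul_eq_nsmul R, smul_smul, invOf_mul_self, one_smul]

end Averaging

theorem IsVonNeumannRegular.monoidAlgebra {R G : Type*} [Ring R] [Group G] [Fintype G]
    [Invertible (Fintype.card G : R)] (hR : IsVonNeumannRegular R) :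
    IsVonNeumannRegular (MonoidAlgebra R G) := by
  intro α
  obtain ⟨π, hπ⟩ := hR.exists_isProj_of_fg
    ((Submodule.fg_span_singleton (R := MonoidAlgebra R G) α).restrictScalars (R := R))
  have hσ := π.isProj_equivariantAverage G hπ
  obtain ⟨s, hs⟩ := Submodule.mem_span_singleton.mp (hσ.map_mem 1)
  refine ⟨s, ?_⟩
  calc α * s * α = α • π.equivariantAverage G 1 := by
        rw [← hs, smul_eq_mul, smul_eq_mul, mul_assoc]
    _ = π.equivariantAverage G α := by rw [← map_smul, smul_eq_mul, mul_one]
    _ = α := hσ.map_id α (Submodule.mem_span_singleton_self α)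

theorem IsVonNeumannRegular.eq_bot_of_mul_eq_zero {R : Type*} [Ring R]
    (hR : IsVonNeumannRegular R) (I : TwoSidedIdeal R) (hI : ∀ x ∈ I, ∀ y ∈ I, x * y = 0) :
    I = ⊥ := by
  refine eq_bot_iff.mpr fun a ha => ?_
  obtain ⟨x, hx⟩ := hR a
  rw [← hx, hI _ (I.mul_mem_right a x ha) a ha]
  exact zero_mem _

theorem semiprime_monoidAlgebra_of_vonNeumannRegular
    {k : Type*} [Field k] (G : Type*) [Group G] [Fintype G]
    (hG : ¬ (ringChar k ∣ Fintype.card G))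
    (R : Type*) [Ring R] [Algebra k R]
    (hR : ∀ a : R, ∃ x : R, a * x * a = a) :
    ∀ I : TwoSidedIdeal (MonoidAlgebra R G),
      (∀ x ∈ I, ∀ y ∈ I, x * y = 0) → I = ⊥ := by
  have hcard : (Fintype.card G : k) ≠ 0 := fun h => hG ((CharP.cast_eq_zero_iff k _ _).mp h)
  let : Invertible (Fintype.card G : R) :=
    ((invertibleOfNonzero hcard).map (algebraMap k R)).copy _ (map_natCast _ _).symm
  exact (IsVonNeumannRegular.monoidAlgebra (G := G) hR).eq_bot_of_mul_eq_zero
end
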